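/- arXiv:quant-ph/0608227 — 3 statements merged into one kernel-verified Lean document; each statement's English description precedes it below -/
import Mathlib

section
/- For real parameters α, β, γ, the 4×4 unitary N = exp(iα σ₁⊗σ₁) · exp(iβ σ₂⊗σ₂) · exp(iγ σ₃⊗σ₃) equals Σ_{i=0}^{3} c_i (σ_i ⊗ σ_i), where c₀ = cos α cos β cos γ + i sin α sin β sin γ, c₁ = cos α sin β sin γ + i sin α cos β cos γ, c₂ = sin α cos β sin γ + i cos α sin β cos γ, and c₃ = sin α sin β cos γ + i cos α cos β sin γ. -/
open scoped Kronecker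
open Matrix

noncomputable section

/-- `M₂(ℂ)`. -/
abbrev M2 : Type := Matrix (Fin 2) (Fin 2) ℂ

/-- `M₄(ℂ)`, identified with `M₂(ℂ) ⊗ M₂(ℂ)` via the Kronecker product. -/
abbrev M4 : Type := Matrix (Fin 2 × Fin 2) (Fin 2 × Fin 2) ℂ

/-- The Pauli matrices; `σ 0` is the identity. -/
def σ : Fin 4 → M2
  | 0 => 1
  | 1 => !![0, 1; 1, 0]
  | 2 => !![0, -Complex.I; Complex.I, 0]
  | 3 => !![1, 0; 0, -1]

/-- `N = exp(iα σ₁⊗σ₁) exp(iβ σ₂⊗σ₂) exp(iγ σ₃⊗σ₃)`. -/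
def Nmat (α β γ : ℝ) : M4 :=
  NormedSpace.exp (((α : ℂ) * Complex.I) • (σ 1 ⊗ₖ σ 1)) *
  NormedSpace.exp (((β : ℂ) * Complex.I) • (σ 2 ⊗ₖ σ 2)) *
  NormedSpace.exp (((γ : ℂ) * Complex.I) • (σ 3 ⊗ₖ σ 3))

/-- The Hilbert–Schmidt inner product `⟨x, y⟩ = τ(x* y)` on `M₄(ℂ)`,
with the normalized trace `τ = (1/4) Tr`. -/
def hsInner (x y : M4) : ℂ := (star x * y).trace / 4


lemma exp_smul_inv (A : M4) (h : A * A = 1) (t : ℂ) :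
    NormedSpace.exp (t • A) = Complex.cosh t • (1 : M4) + Complex.sinh t • A := by
  have hpow : ∀ n : ℕ, ((Nat.factorial n : ℂ))⁻¹ • (t • A) ^ n
      = (t ^ n / (Nat.factorial n)) • (if Even n then (1 : M4) else A) := by
    intro n
    rcases Nat.even_or_odd n with ⟨k, rfl⟩ | ⟨k, rfl⟩
    · have hA : A ^ (k + k) = 1 := by rw [← two_mul, pow_mul, sq, h, one_pow]
      rw [if_pos ⟨k, rfl⟩, smul_pow, hA, smul_smul]
      congr 1
      ring
    · have hA : A ^ (2 * k + 1) = A := by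
        rw [pow_succ, pow_mul, sq, h, one_pow, one_mul]
      rw [if_neg (by simp [Nat.even_add_one, parity_simps]), smul_pow, hA, smul_smul]
      congr 1
      ring
  have hc : HasSum (fun k : ℕ => ((Nat.factorial (2*k) : ℂ))⁻¹ • (t • A) ^ (2 * k))
      (Complex.cosh t • (1 : M4)) := by
    have h1 := (Complex.hasSum_cosh t).smul_const (1 : M4)
    have e : (fun k : ℕ => ((Nat.factorial (2*k) : ℂ))⁻¹ • (t • A) ^ (2 * k))
        = fun k : ℕ => (t ^ (2*k) / ((Nat.factorial (2*k)) : ℂ)) • (1:M4) := by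
      funext k
      rw [hpow, if_pos ⟨k, two_mul k⟩]
    rw [e]
    exact h1
  have hs : HasSum (fun k : ℕ => ((Nat.factorial (2*k+1) : ℂ))⁻¹ • (t • A) ^ (2 * k + 1))
      (Complex.sinh t • A) := by
    have h1 := (Complex.hasSum_sinh t).smul_const A
    have e : (fun k : ℕ => ((Nat.factorial (2*k+1) : ℂ))⁻¹ • (t • A) ^ (2 * k + 1))
        = fun k : ℕ => (t ^ (2*k+1) / ((Nat.factorial (2*k+1)) : ℂ)) • A := by
      funext k
      rw [hpow, if_neg (by simp [Nat.even_add_one, parity_simps])]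
    rw [e]
    exact h1
  have total := HasSum.even_add_odd
    (f := fun n : ℕ => ((Nat.factorial n : ℂ))⁻¹ • (t • A) ^ n) hc hs
  rw [NormedSpace.exp_eq_tsum ℂ]
  exact total.tsum_eq

lemma sigma0 : σ 0 = 1 := rfl
lemma sig1_sq : σ 1 * σ 1 = 1 := by
  show !![0, 1; 1, 0] * !![0, 1; 1, 0] = 1
  rw [show (1 : M2) = !![1,0;0,1] by rw [Matrix.one_fin_two]]
  simp [Matrix.mul_fin_two]
lemma sig2_sq : σ 2 * σ 2 = 1 := by
  show !![0, -Complex.I; Complex.I, 0] * !![0, -Complex.I; Complex.I, 0] = 1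
  rw [show (1 : M2) = !![1,0;0,1] by rw [Matrix.one_fin_two]]
  simp [Matrix.mul_fin_two, Complex.I_mul_I]
lemma sig3_sq : σ 3 * σ 3 = 1 := by
  show !![1, 0; 0, -1] * !![1, 0; 0, -1] = 1
  rw [show (1 : M2) = !![1,0;0,1] by rw [Matrix.one_fin_two]]
  simp [Matrix.mul_fin_two]
lemma sig12 : σ 1 * σ 2 = Complex.I • σ 3 := by
  show !![0, 1; 1, 0] * !![0, -Complex.I; Complex.I, 0] = Complex.I • !![1, 0; 0, -1]
  simp [Matrix.mul_fin_two, Matrix.smul_of, Matrix.smul_cons]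
lemma sig13 : σ 1 * σ 3 = (-Complex.I) • σ 2 := by
  show !![0, 1; 1, 0] * !![1, 0; 0, -1] = (-Complex.I) • !![0, -Complex.I; Complex.I, 0]
  simp [Matrix.mul_fin_two, Matrix.smul_of, Matrix.smul_cons]
lemma sig23 : σ 2 * σ 3 = Complex.I • σ 1 := by
  show !![0, -Complex.I; Complex.I, 0] * !![1, 0; 0, -1] = Complex.I • !![0, 1; 1, 0]
  simp [Matrix.mul_fin_two, Matrix.smul_of, Matrix.smul_cons]

lemma K1_sq : (σ 1 ⊗ₖ σ 1) * (σ 1 ⊗ₖ σ 1) = (1 : M4) := by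
  rw [← Matrix.mul_kronecker_mul, sig1_sq, Matrix.one_kronecker_one]
lemma K2_sq : (σ 2 ⊗ₖ σ 2) * (σ 2 ⊗ₖ σ 2) = (1 : M4) := by
  rw [← Matrix.mul_kronecker_mul, sig2_sq, Matrix.one_kronecker_one]
lemma K3_sq : (σ 3 ⊗ₖ σ 3) * (σ 3 ⊗ₖ σ 3) = (1 : M4) := by
  rw [← Matrix.mul_kronecker_mul, sig3_sq, Matrix.one_kronecker_one]
lemma K12 : (σ 1 ⊗ₖ σ 1) * (σ 2 ⊗ₖ σ 2) = -(σ 3 ⊗ₖ σ 3) := by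
  rw [← Matrix.mul_kronecker_mul, sig12, Matrix.smul_kronecker, Matrix.kronecker_smul,
    smul_smul, Complex.I_mul_I, neg_one_smul]
lemma K13 : (σ 1 ⊗ₖ σ 1) * (σ 3 ⊗ₖ σ 3) = -(σ 2 ⊗ₖ σ 2) := by
  rw [← Matrix.mul_kronecker_mul, sig13, Matrix.smul_kronecker, Matrix.kronecker_smul,
    smul_smul]
  norm_num [Complex.I_mul_I]
lemma K23 : (σ 2 ⊗ₖ σ 2) * (σ 3 ⊗ₖ σ 3) = -(σ 1 ⊗ₖ σ 1) := by
  rw [← Matrix.mul_kronecker_mul, sig23, Matrix.smul_kronecker, Matrix.kronecker_smul,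
    smul_smul, Complex.I_mul_I, neg_one_smul]

/-- `N = Σ_{i=0}^{3} c_i (σ_i ⊗ σ_i)` with
`c₀ = cos α cos β cos γ + i sin α sin β sin γ`, etc. -/
theorem Nmat_eq_sum_pauli (α β γ : ℝ) :
    Nmat α β γ =
      (((Real.cos α * Real.cos β * Real.cos γ : ℝ) : ℂ)
          + Complex.I * ((Real.sin α * Real.sin β * Real.sin γ : ℝ) : ℂ)) • (σ 0 ⊗ₖ σ 0)
      + (((Real.cos α * Real.sin β * Real.sin γ : ℝ) : ℂ)
          + Complex.I * ((Real.sin α * Real.cos β * Real.cos γ : ℝ) : ℂ)) • (σ 1 ⊗ₖ σ 1)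
      + (((Real.sin α * Real.cos β * Real.sin γ : ℝ) : ℂ)
          + Complex.I * ((Real.cos α * Real.sin β * Real.cos γ : ℝ) : ℂ)) • (σ 2 ⊗ₖ σ 2)
      + (((Real.sin α * Real.sin β * Real.cos γ : ℝ) : ℂ)
          + Complex.I * ((Real.cos α * Real.cos β * Real.sin γ : ℝ) : ℂ)) • (σ 3 ⊗ₖ σ 3) := by
  rw [Nmat, exp_smul_inv _ K1_sq, exp_smul_inv _ K2_sq, exp_smul_inv _ K3_sq,
    Complex.cosh_mul_I, Complex.sinh_mul_I, Complex.cosh_mul_I, Complex.sinh_mul_I,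
    Complex.cosh_mul_I, Complex.sinh_mul_I,
    ← Complex.ofReal_cos, ← Complex.ofReal_sin, ← Complex.ofReal_cos, ← Complex.ofReal_sin,
    ← Complex.ofReal_cos, ← Complex.ofReal_sin, sigma0, Matrix.one_kronecker_one]
  simp only [mul_add, add_mul, Matrix.smul_mul, Matrix.mul_smul, smul_smul, mul_one, one_mul,
    K12, K13, K23, K1_sq, K2_sq, K3_sq, smul_neg, neg_mul, mul_neg, neg_neg, neg_smul]
  match_scalars
  all_goals (ring_nf; try simp only [show (Complex.I)^3 = -Complex.I by rw [pow_succ, Complex.I_sq]; ring, Complex.I_sq]; try ring)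
end
end

section
/- Let N = exp(iα σ₁⊗σ₁) · exp(iβ σ₂⊗σ₂) · exp(iγ σ₃⊗σ₃) for real α, β, γ. Then the subalgebra N(ℂI ⊗ M₂(ℂ))N* is complementary to ℂI ⊗ M₂(ℂ) if and only if at least two of the three numbers cos²α, cos²β, cos²γ equal 1/2. -/
open scoped Kronecker
open Matrix

noncomputable section

/-- The subalgebra `ℂI ⊗ M₂(ℂ)` of `M₄(ℂ)`, as a set. -/
def A0set : Set M4 := {X | ∃ B : M2, X = (1 : M2) ⊗ₖ B}

/-- The subalgebra `W (ℂI ⊗ M₂(ℂ)) W*`, as a set. -/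
def conjA0 (W : M4) : Set M4 := {X | ∃ B : M2, X = W * ((1 : M2) ⊗ₖ B) * star W}

/-- Two subalgebras (given as sets) are complementary (quasi-orthogonal) if their
traceless parts are orthogonal for the Hilbert–Schmidt inner product. -/
def ComplementarySets (S T : Set M4) : Prop :=
  ∀ x ∈ S, ∀ y ∈ T, x.trace = 0 → y.trace = 0 → hsInner x y = 0

/-! ### Auxiliary material -/

open scoped Nat

set_option maxHeartbeats 1000000 in
/-- Exponential of `(θ i) • P` for an involution `P`. -/
theorem exp_sq_one {A : Type*} [NormedRing A] [NormedAlgebra ℂ A] [CompleteSpace A]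
    (θ : ℝ) (P : A) (h : P * P = 1) :
    NormedSpace.exp (((θ : ℂ) * Complex.I) • P)
      = ((Real.cos θ : ℂ)) • (1 : A) + ((Real.sin θ : ℂ) * Complex.I) • P := by
  have hP2 : P ^ 2 = 1 := by rw [sq]; exact h
  have heven : ∀ n : ℕ, P ^ (2 * n) = 1 := by
    intro n; rw [pow_mul, hP2, one_pow]
  rw [NormedSpace.exp_eq_tsum ℂ]
  refine HasSum.tsum_eq ?_
  have hc : HasSum (fun n : ℕ => ((((2*n)! : ℂ))⁻¹) • (((θ:ℂ) * Complex.I) • P) ^ (2*n))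
      (((Real.cos θ : ℂ)) • (1 : A)) := by
    rw [Complex.ofReal_cos]
    have := (Complex.hasSum_cos (θ : ℂ)).smul_const (1 : A)
    convert this using 2 with n
    rw [smul_pow, heven, smul_smul]
    congr 1
    rw [mul_pow, pow_mul (θ:ℂ), pow_mul Complex.I, Complex.I_sq, div_eq_mul_inv]
    ring
  have hs : HasSum (fun n : ℕ => ((((2*n+1)! : ℂ))⁻¹) • (((θ:ℂ) * Complex.I) • P) ^ (2*n+1))
      (((Real.sin θ : ℂ) * Complex.I) • P) := by
    rw [Complex.ofReal_sin]
    have := ((Complex.hasSum_sin (θ : ℂ)).mul_right Complex.I).smul_const P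
    convert this using 2 with n
    rw [smul_pow, pow_succ P, heven, one_mul, smul_smul]
    congr 1
    rw [pow_succ (((θ:ℂ))*Complex.I), mul_pow, pow_mul (θ:ℂ), pow_mul Complex.I,
      Complex.I_sq, div_eq_mul_inv]
    ring
  exact hc.even_add_odd hs

/-- `σ k ⊗ σ k`. -/
def Pq (k : Fin 4) : M4 := σ k ⊗ₖ σ k

/-- The generic element `x₀ + x₁ σ₁⊗σ₁ + x₂ σ₂⊗σ₂ + x₃ σ₃⊗σ₃`. -/
def Nq (x0 x1 x2 x3 : ℂ) : M4 := x0 • 1 + x1 • Pq 1 + x2 • Pq 2 + x3 • Pq 3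

lemma P1_sq : (σ 1 ⊗ₖ σ 1 : M4) * (σ 1 ⊗ₖ σ 1) = 1 := by
  ext ⟨i,j⟩ ⟨k,l⟩
  fin_cases i <;> fin_cases j <;> fin_cases k <;> fin_cases l <;>
    simp [σ, Matrix.mul_apply, Matrix.one_apply, Fintype.sum_prod_type,
      Fin.sum_univ_succ, Matrix.kroneckerMap_apply, Prod.ext_iff]

lemma P2_sq : (σ 2 ⊗ₖ σ 2 : M4) * (σ 2 ⊗ₖ σ 2) = 1 := by
  ext ⟨i,j⟩ ⟨k,l⟩
  fin_cases i <;> fin_cases j <;> fin_cases k <;> fin_cases l <;>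
    simp [σ, Matrix.mul_apply, Matrix.one_apply, Fintype.sum_prod_type,
      Fin.sum_univ_succ, Matrix.kroneckerMap_apply, Prod.ext_iff]

lemma P3_sq : (σ 3 ⊗ₖ σ 3 : M4) * (σ 3 ⊗ₖ σ 3) = 1 := by
  ext ⟨i,j⟩ ⟨k,l⟩
  fin_cases i <;> fin_cases j <;> fin_cases k <;> fin_cases l <;>
    simp [σ, Matrix.mul_apply, Matrix.one_apply, Fintype.sum_prod_type,
      Fin.sum_univ_succ, Matrix.kroneckerMap_apply, Prod.ext_iff]

set_option maxHeartbeats 2000000 in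
lemma trace4 (x0 x1 x2 x3 y0 y1 y2 y3 : ℂ) (B C : M2) :
    (Nq x0 x1 x2 x3 * ((1:M2) ⊗ₖ B) * Nq y0 y1 y2 y3 * ((1:M2) ⊗ₖ C)).trace =
    2*(x0*y0*(B 0 0*C 0 0 + B 0 1*C 1 0 + B 1 0*C 0 1 + B 1 1*C 1 1)
      + x1*y1*(B 1 1*C 0 0 + B 1 0*C 1 0 + B 0 1*C 0 1 + B 0 0*C 1 1)
      + x2*y2*(B 1 1*C 0 0 - B 1 0*C 1 0 - B 0 1*C 0 1 + B 0 0*C 1 1)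
      + x3*y3*(B 0 0*C 0 0 - B 0 1*C 1 0 - B 1 0*C 0 1 + B 1 1*C 1 1)) := by
  simp [Nq, Pq, σ, Matrix.trace, Matrix.mul_apply, Matrix.one_apply, Matrix.diag,
    Fintype.sum_prod_type, Fin.sum_univ_succ, Matrix.kroneckerMap_apply, Prod.ext_iff]
  ring

set_option maxHeartbeats 2000000 in
lemma trace3 (x0 x1 x2 x3 y0 y1 y2 y3 : ℂ) (B : M2) :
    (Nq x0 x1 x2 x3 * ((1:M2) ⊗ₖ B) * Nq y0 y1 y2 y3).trace =
    2*(x0*y0 + x1*y1 + x2*y2 + x3*y3)*(B 0 0 + B 1 1) := by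
  simp [Nq, Pq, σ, Matrix.trace, Matrix.mul_apply, Matrix.one_apply, Matrix.diag,
    Fintype.sum_prod_type, Fin.sum_univ_succ, Matrix.kroneckerMap_apply, Prod.ext_iff]
  ring

set_option maxHeartbeats 4000000 in
lemma prod_eq (a1 a2 b1 b2 c1 c2 : ℂ) :
    (a1 • (1:M4) + a2 • Pq 1) * (b1 • (1:M4) + b2 • Pq 2) * (c1 • (1:M4) + c2 • Pq 3) =
    Nq (a1*b1*c1 - a2*b2*c2) (a2*b1*c1 - a1*b2*c2) (a1*b2*c1 - a2*b1*c2) (a1*b1*c2 - a2*b2*c1) := by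
  ext ⟨i,j⟩ ⟨k,l⟩
  fin_cases i <;> fin_cases j <;> fin_cases k <;> fin_cases l <;>
    simp [Nq, Pq, σ, Matrix.mul_apply, Matrix.one_apply, Fintype.sum_prod_type,
      Fin.sum_univ_succ, Matrix.kroneckerMap_apply, Prod.ext_iff] <;> ring

/-- The Pauli coordinates of `Nmat`. -/
def X0 (α β γ : ℝ) : ℂ :=
  ((Real.cos α * Real.cos β * Real.cos γ : ℝ) : ℂ) +
    ((Real.sin α * Real.sin β * Real.sin γ : ℝ) : ℂ) * Complex.I
def X1 (α β γ : ℝ) : ℂ :=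
  ((Real.cos α * Real.sin β * Real.sin γ : ℝ) : ℂ) +
    ((Real.sin α * Real.cos β * Real.cos γ : ℝ) : ℂ) * Complex.I
def X2 (α β γ : ℝ) : ℂ :=
  ((Real.sin α * Real.cos β * Real.sin γ : ℝ) : ℂ) +
    ((Real.cos α * Real.sin β * Real.cos γ : ℝ) : ℂ) * Complex.I
def X3 (α β γ : ℝ) : ℂ :=
  ((Real.sin α * Real.sin β * Real.cos γ : ℝ) : ℂ) +
    ((Real.cos α * Real.cos β * Real.sin γ : ℝ) : ℂ) * Complex.I
def Y0 (α β γ : ℝ) : ℂ :=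
  ((Real.cos α * Real.cos β * Real.cos γ : ℝ) : ℂ) -
    ((Real.sin α * Real.sin β * Real.sin γ : ℝ) : ℂ) * Complex.I
def Y1 (α β γ : ℝ) : ℂ :=
  ((Real.cos α * Real.sin β * Real.sin γ : ℝ) : ℂ) -
    ((Real.sin α * Real.cos β * Real.cos γ : ℝ) : ℂ) * Complex.I
def Y2 (α β γ : ℝ) : ℂ :=
  ((Real.sin α * Real.cos β * Real.sin γ : ℝ) : ℂ) -
    ((Real.cos α * Real.sin β * Real.cos γ : ℝ) : ℂ) * Complex.I
def Y3 (α β γ : ℝ) : ℂ :=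
  ((Real.sin α * Real.sin β * Real.cos γ : ℝ) : ℂ) -
    ((Real.cos α * Real.cos β * Real.sin γ : ℝ) : ℂ) * Complex.I

lemma N_eq (α β γ : ℝ) :
    Nmat α β γ = Nq (X0 α β γ) (X1 α β γ) (X2 α β γ) (X3 α β γ) := by
  letI : SeminormedRing M4 := Matrix.linftyOpSemiNormedRing
  letI : NormedRing M4 := Matrix.linftyOpNormedRing
  letI : NormedAlgebra ℂ M4 := Matrix.linftyOpNormedAlgebra
  unfold Nmat
  erw [exp_sq_one α _ P1_sq, exp_sq_one β _ P2_sq, exp_sq_one γ _ P3_sq]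
  have h := prod_eq ((Real.cos α : ℝ) : ℂ) ((Real.sin α : ℝ) * Complex.I)
      ((Real.cos β : ℝ) : ℂ) ((Real.sin β : ℝ) * Complex.I)
      ((Real.cos γ : ℝ) : ℂ) ((Real.sin γ : ℝ) * Complex.I)
  rw [show (Pq 1 : M4) = σ 1 ⊗ₖ σ 1 from rfl, show (Pq 2 : M4) = σ 2 ⊗ₖ σ 2 from rfl,
    show (Pq 3 : M4) = σ 3 ⊗ₖ σ 3 from rfl] at h
  rw [h]
  have e0 : ((Real.cos α : ℂ)) * (Real.cos β : ℂ) * (Real.cos γ : ℂ)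
      - ((Real.sin α : ℂ) * Complex.I) * ((Real.sin β : ℂ) * Complex.I) * ((Real.sin γ : ℂ) * Complex.I)
      = X0 α β γ := by
    unfold X0; simp only [Complex.ofReal_mul]
    linear_combination (-((Real.sin α : ℂ) * (Real.sin β : ℂ) * (Real.sin γ : ℂ) * Complex.I)) * Complex.I_sq
  have e1 : ((Real.sin α : ℂ) * Complex.I) * (Real.cos β : ℂ) * (Real.cos γ : ℂ)
      - (Real.cos α : ℂ) * ((Real.sin β : ℂ) * Complex.I) * ((Real.sin γ : ℂ) * Complex.I)
      = X1 α β γ := by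
    unfold X1; simp only [Complex.ofReal_mul]
    linear_combination (-((Real.cos α : ℂ) * (Real.sin β : ℂ) * (Real.sin γ : ℂ))) * Complex.I_sq
  have e2 : (Real.cos α : ℂ) * ((Real.sin β : ℂ) * Complex.I) * (Real.cos γ : ℂ)
      - ((Real.sin α : ℂ) * Complex.I) * (Real.cos β : ℂ) * ((Real.sin γ : ℂ) * Complex.I)
      = X2 α β γ := by
    unfold X2; simp only [Complex.ofReal_mul]
    linear_combination (-((Real.sin α : ℂ) * (Real.cos β : ℂ) * (Real.sin γ : ℂ))) * Complex.I_sq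
  have e3 : (Real.cos α : ℂ) * (Real.cos β : ℂ) * ((Real.sin γ : ℂ) * Complex.I)
      - ((Real.sin α : ℂ) * Complex.I) * ((Real.sin β : ℂ) * Complex.I) * (Real.cos γ : ℂ)
      = X3 α β γ := by
    unfold X3; simp only [Complex.ofReal_mul]
    linear_combination (-((Real.sin α : ℂ) * (Real.sin β : ℂ) * (Real.cos γ : ℂ))) * Complex.I_sq
  rw [e0, e1, e2, e3]

lemma P1_herm : star (σ 1 ⊗ₖ σ 1 : M4) = σ 1 ⊗ₖ σ 1 := by
  ext ⟨i,j⟩ ⟨k,l⟩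
  fin_cases i <;> fin_cases j <;> fin_cases k <;> fin_cases l <;>
    simp [σ, Matrix.conjTranspose_apply, Matrix.kroneckerMap_apply]

lemma P2_herm : star (σ 2 ⊗ₖ σ 2 : M4) = σ 2 ⊗ₖ σ 2 := by
  ext ⟨i,j⟩ ⟨k,l⟩
  fin_cases i <;> fin_cases j <;> fin_cases k <;> fin_cases l <;>
    simp [σ, Matrix.conjTranspose_apply, Matrix.kroneckerMap_apply]

lemma P3_herm : star (σ 3 ⊗ₖ σ 3 : M4) = σ 3 ⊗ₖ σ 3 := by
  ext ⟨i,j⟩ ⟨k,l⟩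
  fin_cases i <;> fin_cases j <;> fin_cases k <;> fin_cases l <;>
    simp [σ, Matrix.conjTranspose_apply, Matrix.kroneckerMap_apply]

lemma Nq_star (x0 x1 x2 x3 : ℂ) :
    star (Nq x0 x1 x2 x3) = Nq (star x0) (star x1) (star x2) (star x3) := by
  unfold Nq
  rw [Matrix.star_eq_conjTranspose]
  simp only [Matrix.conjTranspose_add, Matrix.conjTranspose_smul, Matrix.conjTranspose_one]
  rw [show ((Pq 1 : M4))ᴴ = Pq 1 from P1_herm, show ((Pq 2 : M4))ᴴ = Pq 2 from P2_herm,
    show ((Pq 3 : M4))ᴴ = Pq 3 from P3_herm]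

lemma conjX0 (α β γ : ℝ) : star (X0 α β γ) = Y0 α β γ := by
  unfold X0 Y0
  simp only [Complex.star_def, map_add, _root_.map_mul, Complex.conj_ofReal, Complex.conj_I]
  ring

lemma conjX1 (α β γ : ℝ) : star (X1 α β γ) = Y1 α β γ := by
  unfold X1 Y1
  simp only [Complex.star_def, map_add, _root_.map_mul, Complex.conj_ofReal, Complex.conj_I]
  ring

lemma conjX2 (α β γ : ℝ) : star (X2 α β γ) = Y2 α β γ := by
  unfold X2 Y2
  simp only [Complex.star_def, map_add, _root_.map_mul, Complex.conj_ofReal, Complex.conj_I]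
  ring

lemma conjX3 (α β γ : ℝ) : star (X3 α β γ) = Y3 α β γ := by
  unfold X3 Y3
  simp only [Complex.star_def, map_add, _root_.map_mul, Complex.conj_ofReal, Complex.conj_I]
  ring

lemma N_star_eq (α β γ : ℝ) :
    star (Nmat α β γ) = Nq (Y0 α β γ) (Y1 α β γ) (Y2 α β γ) (Y3 α β γ) := by
  rw [N_eq, Nq_star, conjX0, conjX1, conjX2, conjX3]


lemma kron_star (B : M2) : star ((1:M2) ⊗ₖ B) = (1:M2) ⊗ₖ (star B) := by
  ext ⟨i,j⟩ ⟨k,l⟩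
  fin_cases i <;> fin_cases j <;> fin_cases k <;> fin_cases l <;>
    simp [Matrix.star_eq_conjTranspose, Matrix.conjTranspose_apply,
      Matrix.kroneckerMap_apply, Matrix.one_apply]

lemma sig1_h : star (σ 1) = σ 1 := by
  ext i j
  fin_cases i <;> fin_cases j <;>
    simp [σ, Matrix.star_eq_conjTranspose, Matrix.conjTranspose_apply]

lemma sig2_h : star (σ 2) = σ 2 := by
  ext i j
  fin_cases i <;> fin_cases j <;>
    simp [σ, Matrix.star_eq_conjTranspose, Matrix.conjTranspose_apply]

lemma sig3_h : star (σ 3) = σ 3 := by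
  ext i j
  fin_cases i <;> fin_cases j <;>
    simp [σ, Matrix.star_eq_conjTranspose, Matrix.conjTranspose_apply]

lemma star_conj (W : M4) (B : M2) :
    star (W * ((1:M2) ⊗ₖ B) * star W) = W * ((1:M2) ⊗ₖ (star B)) * star W := by
  simp only [StarMul.star_mul, star_star, kron_star, mul_assoc]

lemma traceK (C : M2) : ((1:M2) ⊗ₖ C : M4).trace = 2*(C 0 0 + C 1 1) := by
  simp [Matrix.trace, Matrix.diag, Fintype.sum_prod_type, Fin.sum_univ_succ,
    Matrix.kroneckerMap_apply, Matrix.one_apply]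
  ring

lemma Tr1 (x0 x1 x2 x3 y0 y1 y2 y3 : ℂ) :
    (Nq x0 x1 x2 x3 * ((1:M2) ⊗ₖ σ 1) * Nq y0 y1 y2 y3 * ((1:M2) ⊗ₖ σ 1)).trace =
      4*(x0*y0 + x1*y1 - x2*y2 - x3*y3) := by
  rw [trace4]
  simp [σ]
  ring

lemma Tr2 (x0 x1 x2 x3 y0 y1 y2 y3 : ℂ) :
    (Nq x0 x1 x2 x3 * ((1:M2) ⊗ₖ σ 2) * Nq y0 y1 y2 y3 * ((1:M2) ⊗ₖ σ 2)).trace =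
      4*(x0*y0 - x1*y1 + x2*y2 - x3*y3) := by
  rw [trace4]
  simp [σ, Complex.I_mul_I]
  ring

lemma Tr3 (x0 x1 x2 x3 y0 y1 y2 y3 : ℂ) :
    (Nq x0 x1 x2 x3 * ((1:M2) ⊗ₖ σ 3) * Nq y0 y1 y2 y3 * ((1:M2) ⊗ₖ σ 3)).trace =
      4*(x0*y0 - x1*y1 - x2*y2 + x3*y3) := by
  rw [trace4]
  simp [σ]
  ring

lemma hxy (u v : ℝ) :
    ((u:ℂ) + (v:ℂ)*Complex.I) * ((u:ℂ) - (v:ℂ)*Complex.I) = ((u^2+v^2 : ℝ) : ℂ) := by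
  push_cast
  linear_combination (-(v:ℂ)^2) * Complex.I_sq

lemma S0 (α β γ : ℝ) :
    X0 α β γ * Y0 α β γ + X1 α β γ * Y1 α β γ + X2 α β γ * Y2 α β γ + X3 α β γ * Y3 α β γ
      = 1 := by
  unfold X0 Y0 X1 Y1 X2 Y2 X3 Y3
  rw [hxy, hxy, hxy, hxy]
  norm_cast
  simp only [mul_pow, Real.sin_sq]
  ring

lemma S1 (α β γ : ℝ) :
    X0 α β γ * Y0 α β γ + X1 α β γ * Y1 α β γ - X2 α β γ * Y2 α β γ - X3 α β γ * Y3 α β γ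
      = (((2*Real.cos β^2 - 1)*(2*Real.cos γ^2 - 1) : ℝ) : ℂ) := by
  unfold X0 Y0 X1 Y1 X2 Y2 X3 Y3
  rw [hxy, hxy, hxy, hxy]
  norm_cast
  simp only [mul_pow, Real.sin_sq]
  ring

lemma S2 (α β γ : ℝ) :
    X0 α β γ * Y0 α β γ - X1 α β γ * Y1 α β γ + X2 α β γ * Y2 α β γ - X3 α β γ * Y3 α β γ
      = (((2*Real.cos α^2 - 1)*(2*Real.cos γ^2 - 1) : ℝ) : ℂ) := by
  unfold X0 Y0 X1 Y1 X2 Y2 X3 Y3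
  rw [hxy, hxy, hxy, hxy]
  norm_cast
  simp only [mul_pow, Real.sin_sq]
  ring

lemma S3 (α β γ : ℝ) :
    X0 α β γ * Y0 α β γ - X1 α β γ * Y1 α β γ - X2 α β γ * Y2 α β γ + X3 α β γ * Y3 α β γ
      = (((2*Real.cos α^2 - 1)*(2*Real.cos β^2 - 1) : ℝ) : ℂ) := by
  unfold X0 Y0 X1 Y1 X2 Y2 X3 Y3
  rw [hxy, hxy, hxy, hxy]
  norm_cast
  simp only [mul_pow, Real.sin_sq]
  ring

lemma S4 (α β γ : ℝ) :
    X0 α β γ * Y0 α β γ - X3 α β γ * Y3 α β γ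
      = (((2*Real.cos γ^2 - 1)*(Real.cos α^2*Real.cos β^2 - Real.sin α^2*Real.sin β^2) : ℝ) : ℂ) := by
  unfold X0 Y0 X3 Y3
  rw [hxy, hxy]
  norm_cast
  simp only [mul_pow, Real.sin_sq]
  ring

lemma S5 (α β γ : ℝ) :
    X1 α β γ * Y1 α β γ - X2 α β γ * Y2 α β γ
      = (((2*Real.cos γ^2 - 1)*(Real.sin α^2*Real.cos β^2 - Real.cos α^2*Real.sin β^2) : ℝ) : ℂ) := by
  unfold X1 Y1 X2 Y2
  rw [hxy, hxy]
  norm_cast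
  simp only [mul_pow, Real.sin_sq]
  ring

/-- `N(ℂI ⊗ M₂(ℂ))N*` is complementary to `ℂI ⊗ M₂(ℂ)` if and only if
at least two of `cos²α`, `cos²β`, `cos²γ` equal `1/2`. -/
theorem complementary_iff_two_cos_sq_eq_half (α β γ : ℝ) :
    ComplementarySets (conjA0 (Nmat α β γ)) A0set ↔
      ((Real.cos α ^ 2 = 1/2 ∧ Real.cos β ^ 2 = 1/2) ∨
       (Real.cos α ^ 2 = 1/2 ∧ Real.cos γ ^ 2 = 1/2) ∨
       (Real.cos β ^ 2 = 1/2 ∧ Real.cos γ ^ 2 = 1/2)) := by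
  constructor
  · intro h
    -- instantiate at the three Pauli matrices
    have ht1 : (Nmat α β γ * ((1:M2) ⊗ₖ σ 1) * star (Nmat α β γ)).trace = 0 := by
      rw [N_star_eq, N_eq, trace3]; norm_num [σ]
    have ht1' : (((1:M2) ⊗ₖ σ 1 : M4)).trace = 0 := by rw [traceK]; norm_num [σ]
    have ht2 : (Nmat α β γ * ((1:M2) ⊗ₖ σ 2) * star (Nmat α β γ)).trace = 0 := by
      rw [N_star_eq, N_eq, trace3]; norm_num [σ]
    have ht2' : (((1:M2) ⊗ₖ σ 2 : M4)).trace = 0 := by rw [traceK]; norm_num [σ]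
    have ht3 : (Nmat α β γ * ((1:M2) ⊗ₖ σ 3) * star (Nmat α β γ)).trace = 0 := by
      rw [N_star_eq, N_eq, trace3]; norm_num [σ]
    have ht3' : (((1:M2) ⊗ₖ σ 3 : M4)).trace = 0 := by rw [traceK]; norm_num [σ]
    have e1 := h _ ⟨σ 1, rfl⟩ ((1:M2) ⊗ₖ σ 1) ⟨σ 1, rfl⟩ ht1 ht1'
    have e2 := h _ ⟨σ 2, rfl⟩ ((1:M2) ⊗ₖ σ 2) ⟨σ 2, rfl⟩ ht2 ht2'
    have e3 := h _ ⟨σ 3, rfl⟩ ((1:M2) ⊗ₖ σ 3) ⟨σ 3, rfl⟩ ht3 ht3'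
    unfold hsInner at e1 e2 e3
    rw [star_conj, sig1_h, N_star_eq, N_eq, Tr1] at e1
    rw [star_conj, sig2_h, N_star_eq, N_eq, Tr2] at e2
    rw [star_conj, sig3_h, N_star_eq, N_eq, Tr3] at e3
    have r1 : (2*Real.cos β^2 - 1)*(2*Real.cos γ^2 - 1) = 0 := by
      have f : X0 α β γ * Y0 α β γ + X1 α β γ * Y1 α β γ - X2 α β γ * Y2 α β γ
          - X3 α β γ * Y3 α β γ = 0 := by linear_combination e1
      rw [S1] at f
      exact_mod_cast f
    have r2 : (2*Real.cos α^2 - 1)*(2*Real.cos γ^2 - 1) = 0 := by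
      have f : X0 α β γ * Y0 α β γ - X1 α β γ * Y1 α β γ + X2 α β γ * Y2 α β γ
          - X3 α β γ * Y3 α β γ = 0 := by linear_combination e2
      rw [S2] at f
      exact_mod_cast f
    have r3 : (2*Real.cos α^2 - 1)*(2*Real.cos β^2 - 1) = 0 := by
      have f : X0 α β γ * Y0 α β γ - X1 α β γ * Y1 α β γ - X2 α β γ * Y2 α β γ
          + X3 α β γ * Y3 α β γ = 0 := by linear_combination e3
      rw [S3] at f
      exact_mod_cast f
    rcases mul_eq_zero.mp r2 with h2 | h2
    · have hA : Real.cos α^2 = 1/2 := by linarith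
      rcases mul_eq_zero.mp r1 with h1 | h1
      · exact Or.inl ⟨hA, by linarith⟩
      · exact Or.inr (Or.inl ⟨hA, by linarith⟩)
    · have hC : Real.cos γ^2 = 1/2 := by linarith
      rcases mul_eq_zero.mp r3 with h3 | h3
      · exact Or.inr (Or.inl ⟨by linarith, hC⟩)
      · exact Or.inr (Or.inr ⟨by linarith, hC⟩)
  · intro h x hx y hy hxt hyt
    obtain ⟨B, rfl⟩ := hx
    obtain ⟨C, rfl⟩ := hy
    have hv : (2*Real.cos α^2 - 1)*(2*Real.cos β^2 - 1) = 0 ∧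
        (2*Real.cos γ^2 - 1)*(Real.cos α^2*Real.cos β^2 - Real.sin α^2*Real.sin β^2) = 0 ∧
        (2*Real.cos γ^2 - 1)*(Real.sin α^2*Real.cos β^2 - Real.cos α^2*Real.sin β^2) = 0 := by
      rcases h with ⟨hA, hB⟩ | ⟨hA, hC⟩ | ⟨hB, hC⟩
      · have hsa : Real.sin α^2 = 1/2 := by have := Real.sin_sq_add_cos_sq α; linarith
        have hsb : Real.sin β^2 = 1/2 := by have := Real.sin_sq_add_cos_sq β; linarith
        exact ⟨by rw [hA]; ring, by rw [hA, hB, hsa, hsb]; ring, by rw [hA, hB, hsa, hsb]; ring⟩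
      · exact ⟨by rw [hA]; ring, by rw [hC]; ring, by rw [hC]; ring⟩
      · exact ⟨by rw [hB]; ring, by rw [hC]; ring, by rw [hC]; ring⟩
    obtain ⟨hv3, hv4, hv5⟩ := hv
    have f3 : X0 α β γ * Y0 α β γ - X1 α β γ * Y1 α β γ - X2 α β γ * Y2 α β γ
        + X3 α β γ * Y3 α β γ = 0 := by rw [S3, hv3]; norm_num
    have f4 : X0 α β γ * Y0 α β γ - X3 α β γ * Y3 α β γ = 0 := by rw [S4, hv4]; norm_num
    have f5 : X1 α β γ * Y1 α β γ - X2 α β γ * Y2 α β γ = 0 := by rw [S5, hv5]; norm_num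
    rw [N_star_eq, N_eq, trace3, S0] at hxt
    rw [traceK] at hyt
    have hB11 : star B 1 1 = -(star B 0 0) := by
      have hb : B 1 1 = -(B 0 0) := by linear_combination hxt/2
      simp [Matrix.star_eq_conjTranspose, Matrix.conjTranspose_apply, hb]
    have hC11 : C 1 1 = -(C 0 0) := by linear_combination hyt/2
    unfold hsInner
    rw [star_conj, N_star_eq, N_eq, trace4, hB11, hC11]
    linear_combination (star B 0 0 * C 0 0) * f3
      + ((star B 0 1 * C 1 0 + star B 1 0 * C 0 1)/2) * f4
      + ((star B 1 0 * C 1 0 + star B 0 1 * C 0 1)/2) * f5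
end
end

section
/- Let N = exp(iα σ₁⊗σ₁) · exp(iβ σ₂⊗σ₂) · exp(iγ σ₃⊗σ₃) = Σ_{i=0}^{3} c_i (σ_i ⊗ σ_i) for real α, β, γ. Then the subalgebra N(ℂI ⊗ M₂(ℂ))N* is complementary to ℂI ⊗ M₂(ℂ) if and only if |c₀|² = |c₁|² = |c₂|² = |c₃|² = 1/4. -/
open scoped Kronecker
open Matrix

noncomputable section

attribute [local instance] Matrix.linftyOpNormedRing Matrix.linftyOpNormedAlgebra
  Matrix.linftyOpNormedAddCommGroup

lemma star_kron (A B : M2) : star (A ⊗ₖ B) = (star A) ⊗ₖ (star B) := by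
  ext ⟨a,b⟩ ⟨c,d⟩
  simp [Matrix.star_eq_conjTranspose, Matrix.conjTranspose_apply, Matrix.kroneckerMap_apply,
    mul_comm]

lemma sigma_herm : ∀ i, star (σ i) = σ i := by
  intro i
  fin_cases i <;>
    simp [σ, Matrix.star_eq_conjTranspose] <;>
    · ext a b; fin_cases a <;> fin_cases b <;> simp [Matrix.conjTranspose_apply]

lemma sigma_sq : ∀ i, σ i * σ i = 1 := by
  intro i
  fin_cases i <;>
    · ext a b; fin_cases a <;> fin_cases b <;>
      simp [σ, Matrix.mul_apply, Fin.sum_univ_two, Matrix.one_apply, Complex.I_mul_I,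
        Complex.ext_iff] <;> norm_num

lemma trace_sigma_mul : ∀ k l : Fin 4, Matrix.trace (σ k * σ l) = if k = l then 2 else 0 := by
  intro k l
  fin_cases k <;> fin_cases l <;>
    simp [σ, Matrix.trace, Matrix.mul_apply, Fin.sum_univ_two, Matrix.diag, Matrix.one_apply,
      Complex.ext_iff] <;> norm_num

lemma key (c d : Fin 4 → ℂ) (B B' : M2) :
    Matrix.trace ((∑ i : Fin 4, c i • (σ i ⊗ₖ σ i)) * ((1 : M2) ⊗ₖ B) *
      (∑ i : Fin 4, d i • (σ i ⊗ₖ σ i)) * ((1 : M2) ⊗ₖ B')) =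
    ∑ k : Fin 4, c k * d k * (2 * Matrix.trace (σ k * B * σ k * B')) := by
  simp only [Finset.sum_mul, Finset.mul_sum, smul_mul_assoc, mul_smul_comm,
    Matrix.trace_sum, Matrix.trace_smul]
  simp only [Finset.smul_sum, smul_eq_mul, ← Matrix.mul_kronecker_mul, Matrix.one_mul,
    Matrix.mul_one, Matrix.trace_kronecker]
  simp only [Fin.sum_univ_four, trace_sigma_mul]
  simp only [Fin.reduceEq, reduceIte, if_true]
  ring

lemma sum_traces (X Y : M2) :
    ∑ k : Fin 4, Matrix.trace (σ k * X * σ k * Y) =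
      2 * (X 0 0 + X 1 1) * (Y 0 0 + Y 1 1) := by
  rw [Fin.sum_univ_four]
  simp [σ, Matrix.trace, Matrix.diag, Matrix.mul_apply, Fin.sum_univ_two, Matrix.one_apply,
    Matrix.vecMul, dotProduct, Complex.I_sq]
  ring_nf
  simp [Complex.I_sq]
  ring

lemma trace_sBs (k : Fin 4) (B : M2) :
    Matrix.trace (σ k * B * σ k * 1) = B 0 0 + B 1 1 := by
  fin_cases k <;>
    simp [σ, Matrix.trace, Matrix.diag, Matrix.mul_apply, Fin.sum_univ_two, Matrix.one_apply,
      Matrix.vecMul, dotProduct, Complex.I_sq] <;>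
    (try ring_nf) <;> (try simp [Complex.I_sq]) <;> try ring

lemma trace_ssss (k j : Fin 4) :
    Matrix.trace (σ k * σ j * σ k * σ j) =
      if k = 0 ∨ j = 0 ∨ k = j then 2 else -2 := by
  fin_cases k <;> fin_cases j <;>
    simp [σ, Matrix.trace, Matrix.diag, Matrix.mul_apply, Fin.sum_univ_two, Matrix.one_apply,
      Matrix.vecMul, dotProduct, Complex.I_sq, Complex.ext_iff] <;>
    norm_num

lemma exp_factor_unitary (t : ℝ) (j : Fin 4) :
    NormedSpace.exp (((t : ℂ) * Complex.I) • (σ j ⊗ₖ σ j)) ∈ unitary M4 := by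
  refine @NormedSpace.exp_mem_unitary_of_mem_skewAdjoint _ _ _ _ _ ⟨by exact (continuous_star : Continuous (star : M4 → M4))⟩ _ ?_
  rw [skewAdjoint.mem_iff, star_smul, star_kron, sigma_herm]
  rw [← neg_smul]
  congr 1
  simp [Complex.ext_iff]

lemma Nmat_unitary (α β γ : ℝ) : Nmat α β γ ∈ unitary M4 :=
  mul_mem (mul_mem (exp_factor_unitary α 1) (exp_factor_unitary β 2)) (exp_factor_unitary γ 3)

lemma quarter_of_abs {z : ℂ} (h : ‖z‖ ^ 2 = 1/4) :
    z * (starRingEnd ℂ) z = 1/4 := by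
  rw [Complex.mul_conj, ← Complex.sq_norm, h]
  norm_num

lemma abs_of_quarter {z : ℂ} (h : z * (starRingEnd ℂ) z = 1/4) :
    ‖z‖ ^ 2 = 1/4 := by
  rw [Complex.mul_conj] at h
  rw [Complex.sq_norm]
  have h4 : ((1:ℂ)/4) = ((1/4 : ℝ) : ℂ) := by norm_num
  rw [h4] at h
  exact_mod_cast h

/-- writing `N = Σ_{i=0}^{3} c_i (σ_i ⊗ σ_i)` (the `c_i` are the unique such
coefficients, since the `σ_i ⊗ σ_i` are linearly independent), the subalgebra
`N(ℂI ⊗ M₂(ℂ))N*` is complementary to `ℂI ⊗ M₂(ℂ)` if and only if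
`|c₀|² = |c₁|² = |c₂|² = |c₃|² = 1/4`. -/
theorem complementary_iff_coeffs_abs_sq_eq_quarter (α β γ : ℝ) (c : Fin 4 → ℂ)
    (hc : Nmat α β γ = ∑ i : Fin 4, c i • (σ i ⊗ₖ σ i)) :
    ComplementarySets (conjA0 (Nmat α β γ)) A0set ↔
      ∀ i : Fin 4, ‖c i‖ ^ 2 = 1/4 := by
  set N := Nmat α β γ with hN
  have hstar : star N = ∑ i : Fin 4, (starRingEnd ℂ) (c i) • (σ i ⊗ₖ σ i) := by
    rw [hc, star_sum]
    refine Finset.sum_congr rfl fun i _ => ?_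
    rw [star_smul, star_kron, sigma_herm, Complex.star_def]
  have Hkey : ∀ B B' : M2,
      Matrix.trace (N * ((1 : M2) ⊗ₖ B) * star N * ((1 : M2) ⊗ₖ B')) =
        ∑ k : Fin 4, c k * (starRingEnd ℂ) (c k) *
          (2 * Matrix.trace (σ k * B * σ k * B')) := by
    intro B B'
    rw [hstar]
    conv_lhs => rw [hc]
    exact key c (fun i => (starRingEnd ℂ) (c i)) B B'
  have Htr : ∀ B : M2,
      Matrix.trace (N * ((1 : M2) ⊗ₖ B) * star N) =
        ∑ k : Fin 4, c k * (starRingEnd ℂ) (c k) * (2 * (B 0 0 + B 1 1)) := by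
    intro B
    have h := Hkey B 1
    rw [Matrix.one_kronecker_one, Matrix.mul_one] at h
    simp only [trace_sBs] at h
    exact h
  have hUni : N * star N = 1 := (Unitary.mem_iff.mp (Nmat_unitary α β γ)).2
  have hS : ∑ k : Fin 4, c k * (starRingEnd ℂ) (c k) = 1 := by
    have h := Htr 1
    rw [Matrix.one_kronecker_one, Matrix.mul_one, hUni] at h
    have h1 : Matrix.trace (1 : M4) = 4 := by
      simp [Matrix.trace_one]
    rw [h1] at h
    simp only [Matrix.one_apply_eq] at h
    rw [Fin.sum_univ_four] at h ⊢
    linear_combination -h / 4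
  constructor
  · intro Hcomp
    have Estep : ∀ j : Fin 4, σ j 0 0 + σ j 1 1 = 0 → Matrix.trace ((1:M2) ⊗ₖ σ j) = 0 →
        ∑ k : Fin 4, c k * (starRingEnd ℂ) (c k) *
          (2 * Matrix.trace (σ k * σ j * σ k * σ j)) = 0 := by
      intro j hj0 hjt
      have hx : N * ((1 : M2) ⊗ₖ σ j) * star N ∈ conjA0 N := ⟨σ j, rfl⟩
      have hy : ((1 : M2) ⊗ₖ σ j : M4) ∈ A0set := ⟨σ j, rfl⟩
      have htr1 : Matrix.trace (N * ((1 : M2) ⊗ₖ σ j) * star N) = 0 := by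
        rw [Htr (σ j), hj0]
        simp
      have h := Hcomp _ hx _ hy htr1 hjt
      unfold hsInner at h
      rw [div_eq_zero_iff] at h
      rcases h with h | h
      · rw [StarMul.star_mul, StarMul.star_mul, star_star, star_kron, sigma_herm, star_one,
          ← Matrix.mul_assoc] at h
        rw [← Hkey (σ j) (σ j)]
        exact h
      · norm_num at h
    have E1 := Estep 1 (by simp [σ]) (by rw [Matrix.trace_kronecker]; simp [σ, Matrix.trace, Matrix.diag, Fin.sum_univ_two])
    have E2 := Estep 2 (by simp [σ]) (by rw [Matrix.trace_kronecker]; simp [σ, Matrix.trace, Matrix.diag, Fin.sum_univ_two])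
    have E3 := Estep 3 (by simp [σ]) (by rw [Matrix.trace_kronecker]; simp [σ, Matrix.trace, Matrix.diag, Fin.sum_univ_two])
    simp only [Fin.sum_univ_four, trace_ssss] at E1 E2 E3
    simp only [Fin.reduceEq, false_or, or_self, or_false, false_and, if_false, reduceIte] at E1 E2 E3
    rw [Fin.sum_univ_four] at hS
    intro i
    apply abs_of_quarter
    fin_cases i
    · show c 0 * (starRingEnd ℂ) (c 0) = 1/4
      linear_combination (hS + E1/4 + E2/4 + E3/4) / 4
    · show c 1 * (starRingEnd ℂ) (c 1) = 1/4
      linear_combination (hS + E1/4 - E2/4 - E3/4) / 4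
    · show c 2 * (starRingEnd ℂ) (c 2) = 1/4
      linear_combination (hS - E1/4 + E2/4 - E3/4) / 4
    · show c 3 * (starRingEnd ℂ) (c 3) = 1/4
      linear_combination (hS - E1/4 - E2/4 + E3/4) / 4
  · intro h x hx y hy hxt hyt
    obtain ⟨B, rfl⟩ := hx
    obtain ⟨B', rfl⟩ := hy
    have hu : ∀ k : Fin 4, c k * (starRingEnd ℂ) (c k) = 1/4 := fun k => quarter_of_abs (h k)
    have hB' : B' 0 0 + B' 1 1 = 0 := by
      rw [Matrix.trace_kronecker] at hyt
      have h2 : Matrix.trace (1 : M2) = 2 := by simp [Matrix.trace_one]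
      rw [h2] at hyt
      have hTB : Matrix.trace B' = B' 0 0 + B' 1 1 := by
        simp [Matrix.trace, Matrix.diag, Fin.sum_univ_two]
      rw [hTB] at hyt
      linear_combination hyt / 2
    unfold hsInner
    rw [StarMul.star_mul, StarMul.star_mul, star_star, star_kron, star_one, ← Matrix.mul_assoc]
    rw [Hkey (star B) B']
    simp only [hu]
    have hst := sum_traces (star B) B'
    rw [Fin.sum_univ_four] at hst ⊢
    rw [div_eq_zero_iff]
    left
    linear_combination (hst / 2 + (star B 0 0 + star B 1 1) * hB') / 2 * 2
end
end
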